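/- For every integer d ≥ 2, every even integer k ≥ 2, and all constants c_1, c_2, c_3 > 0, there exists a constant C > 0 such that for every power q of an odd prime, every (c_1,c_2,c_3)-regular set V ⊆ F_q^d, and every E ⊆ V with |E| > q^{(d−1)/2}, one has Λ_k(E) ≤ C ( q^{(d−1)(k−2)/2} |E| + q^{−1} |E|^{k−1} ). -/

import Mathlib

open Finset

/-- `‖x‖ = x₁² + ⋯ + x_d²` for `x ∈ 𝔽_q^d`. -/
def normF {F : Type*} [Field F] {d : ℕ} (x : Fin d → F) : F := ∑ i, x i ^ 2

/-- The `k`-resultant set `Δ_k(E) = {‖x¹ - x² - ⋯ - x^k‖ : xⁱ ∈ E}` (for `k ≥ 2`):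
`y` plays the role of `x¹` and `x 0, …, x (k-2)` play the roles of `x², …, x^k`. -/
def Delta {F : Type*} [Field F] {d : ℕ} (k : ℕ) (E : Set (Fin d → F)) : Set F :=
  {t | ∃ (y : Fin d → F) (x : Fin (k - 1) → Fin d → F),
    y ∈ E ∧ (∀ i, x i ∈ E) ∧ normF (y - ∑ i, x i) = t}

/-- The `2m`-energy `Λ_{2m}(E)`: the number of `2m`-tuples of points of `E`
whose first `m` entries and last `m` entries have equal sums. -/
noncomputable def energy {F : Type*} [Field F] {d : ℕ} (m : ℕ) (E : Set (Fin d → F)) : ℕ :=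
  Nat.card {p : (Fin m → Fin d → F) × (Fin m → Fin d → F) //
    (∀ i, p.1 i ∈ E) ∧ (∀ i, p.2 i ∈ E) ∧ (∑ i, p.1 i) = ∑ i, p.2 i}

/-- The (normalized) Fourier transform of the indicator function of `E ⊆ 𝔽_q^d`,
with respect to the additive character `χ`. -/
noncomputable def ftF {F : Type*} [Field F] [Fintype F] {d : ℕ} (χ : AddChar F ℂ)
    (E : Set (Fin d → F)) (m : Fin d → F) : ℂ :=
  ((Fintype.card F : ℂ) ^ d)⁻¹ *
    ∑ x : Fin d → F, Set.indicator E (fun y => χ (-(∑ i, m i * y i))) x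

/-- `V ⊆ 𝔽_q^d` is `(c₁,c₂,c₃)`-regular (with respect to the character `χ`). -/
def IsRegularVariety {F : Type*} [Field F] [Fintype F] {d : ℕ} (c1 c2 c3 : ℝ) (χ : AddChar F ℂ)
    (V : Set (Fin d → F)) : Prop :=
  c1 * (Fintype.card F : ℝ) ^ (d - 1) ≤ (Nat.card V : ℝ) ∧
  (Nat.card V : ℝ) ≤ c2 * (Fintype.card F : ℝ) ^ (d - 1) ∧
  ∀ m : Fin d → F, m ≠ 0 →
    ‖ftF χ V m‖ ≤ c3 * (Fintype.card F : ℝ) ^ (-(((d : ℝ) + 1) / 2))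

/-- `V ⊆ 𝔽_q²` is a `(c₁,c₂,c₃)`-nondegenerate regular curve defined by a nonzero
polynomial of total degree at most `n` (with respect to the character `χ`). -/
def IsNondegCurve {F : Type*} [Field F] [Fintype F] (c1 c2 c3 : ℝ) (χ : AddChar F ℂ)
    (n : ℕ) (V : Set (Fin 2 → F)) : Prop :=
  (∃ Q : MvPolynomial (Fin 2) F, Q ≠ 0 ∧ Q.totalDegree ≤ n ∧
      (¬∃ A B : MvPolynomial (Fin 2) F, A.totalDegree = 1 ∧ Q = A * B) ∧
      V = {x | MvPolynomial.eval x Q = 0}) ∧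
  c1 * (Fintype.card F : ℝ) ≤ (Nat.card V : ℝ) ∧
  (Nat.card V : ℝ) ≤ c2 * (Fintype.card F : ℝ) ∧
  ∀ m : Fin 2 → F, m ≠ 0 →
    ‖ftF χ V m‖ ≤ c3 * (Fintype.card F : ℝ) ^ (-(3 / 2) : ℝ)

/-!
Write `S_A(ξ) = ∑_{x ∈ A} χ(ξ · x)`. By orthogonality of characters,
`∑_ξ |S_E(ξ)|^{2J} = q^d Λ_{2J}(E)`. Since `E ⊆ V`, `q^d Λ_{2J+4}(E)` is at most `q^d` times the
number of solutions in which one summand ranges over `V`, which is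
`|∑_ξ S_E(ξ)^{J+2} conj(S_E(ξ))^{J+1} conj(S_V(ξ))|`. The term `ξ = 0` contributes at most
`|V| |E|^{2J+3}`, and the Fourier decay of `V` bounds the rest by
`c₃ q^{(d-1)/2} ∑_ξ |S_E(ξ)|^{2J+3}`, which Cauchy–Schwarz controls by the `(2J+2)`-th and
`(2J+4)`-th moments. Solving the resulting quadratic inequality gives
`Λ_{2J+4} ≤ 2 c₂ |E|^{2J+3} / q + c₃² q^{d-1} Λ_{2J+2}`, and induction on `J`, using
`q^{d-1} < |E|²`, gives the bound.
-/

open ComplexConjugate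

lemma AddChar.map_finsetSum {A M ι : Type*} [AddCommMonoid A] [CommMonoid M]
    (ψ : AddChar A M) (s : Finset ι) (f : ι → A) : ψ (∑ i ∈ s, f i) = ∏ i ∈ s, ψ (f i) := by
  classical
  induction s using Finset.induction_on with
  | empty => simp
  | insert a s ha ih => rw [sum_insert ha, prod_insert ha, AddChar.map_add_eq_mul, ih]

def sumEqCount {A : Type*} [AddCommMonoid A] [DecidableEq A] {J : ℕ} (G H : Fin J → Finset A) :
    ℕ :=
  #{p ∈ Fintype.piFinset G ×ˢ Fintype.piFinset H | ∑ i, p.1 i = ∑ i, p.2 i}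

lemma sumEqCount_mono {A : Type*} [AddCommMonoid A] [DecidableEq A] {J : ℕ}
    {G G' H H' : Fin J → Finset A} (hG : ∀ i, G i ⊆ G' i) (hH : ∀ i, H i ⊆ H' i) :
    sumEqCount G H ≤ sumEqCount G' H' :=
  card_le_card <| filter_subset_filter _ <|
    product_subset_product (Fintype.piFinset_subset _ _ hG) (Fintype.piFinset_subset _ _ hH)

lemma energy_one {F : Type*} [Field F] {d : ℕ} (E : Set (Fin d → F)) :
    energy 1 E = Nat.card E := by
  refine Nat.card_congr
    { toFun := fun p => ⟨p.1.1 0, p.2.1 0⟩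
      invFun := fun x => ⟨(fun _ => x, fun _ => x), fun _ => x.2, fun _ => x.2, rfl⟩
      left_inv := ?_
      right_inv := fun _ => rfl }
  rintro ⟨⟨y, z⟩, hy, hz, hyz⟩
  simp only [Fin.sum_univ_one] at hyz
  ext i x <;> simp [Subsingleton.elim i 0, hyz]

lemma le_two_mul_add_of_le_add_of_sq_le {x a w c : ℝ} (hx : x ≤ a + w) (hw : w ^ 2 ≤ c * x)
    (hx0 : 0 ≤ x) (hc : 0 ≤ c) : x ≤ 2 * a + c := by
  -- AM-GM: `w ≤ √(c x) ≤ (x + c) / 2`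
  have : 2 * w ≤ x + c := by nlinarith [sq_nonneg (x - c)]
  linarith

lemma le_pow_mul_of_recursion {Λ : ℕ → ℝ} {a b e r Q : ℝ} (ha : 0 ≤ a) (hb : 0 ≤ b)
    (he : 0 ≤ e) (hr : 0 ≤ r) (hQ : 0 ≤ Q) (hre : r ≤ e ^ 2) (h1 : Λ 1 ≤ e)
    (hstep : ∀ n, Λ (n + 2) ≤ a * e ^ (2 * n + 3) / Q + b * r * Λ (n + 1)) (n : ℕ) :
    Λ (n + 1) ≤ (1 + a + b) ^ (n + 1) * (r ^ n * e + e ^ (2 * n + 1) / Q) := by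
  induction n with
  | zero =>
    have : 0 ≤ e / Q := by positivity
    simp only [zero_add, pow_one, pow_zero, one_mul, mul_zero]
    nlinarith
  | succ n ih =>
    set D := 1 + a + b
    set P := r ^ (n + 1) * e + e ^ (2 * n + 3) / Q
    have hD : 1 ≤ D ^ (n + 1) := one_le_pow₀ (by linarith)
    have hP : 0 ≤ P := by positivity
    have hrP : r * (r ^ n * e + e ^ (2 * n + 1) / Q) ≤ P := by
      rw [mul_add, ← mul_assoc, ← pow_succ', mul_div_assoc']
      show _ ≤ r ^ (n + 1) * e + e ^ (2 * n + 3) / Q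
      gcongr
      calc r * e ^ (2 * n + 1) ≤ e ^ 2 * e ^ (2 * n + 1) := by gcongr
        _ = e ^ (2 * n + 3) := by ring
    have ha' : a * e ^ (2 * n + 3) / Q ≤ a * P := by
      rw [mul_div_assoc]
      exact mul_le_mul_of_nonneg_left (le_add_of_nonneg_left (by positivity)) ha
    have hb' : b * r * Λ (n + 1) ≤ b * D ^ (n + 1) * P :=
      calc b * r * Λ (n + 1)
          ≤ b * r * (D ^ (n + 1) * (r ^ n * e + e ^ (2 * n + 1) / Q)) := by gcongr
        _ = b * D ^ (n + 1) * (r * (r ^ n * e + e ^ (2 * n + 1) / Q)) := by ring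
        _ ≤ b * D ^ (n + 1) * P := by gcongr
    have hDsucc : D ^ (n + 1 + 1) = D ^ (n + 1) + a * D ^ (n + 1) + b * D ^ (n + 1) := by
      simp only [D]
      ring
    have haD : a * P ≤ a * D ^ (n + 1) * P :=
      mul_le_mul_of_nonneg_right (le_mul_of_one_le_right ha hD) hP
    have hDP : 0 ≤ D ^ (n + 1) * P := by positivity
    calc Λ (n + 1 + 1) ≤ a * e ^ (2 * n + 3) / Q + b * r * Λ (n + 1) := hstep n
      _ ≤ D ^ (n + 1 + 1) * P := by
        rw [hDsucc]
        linarith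

lemma rpow_sub_one_div_two_sq {x : ℝ} (hx : 0 ≤ x) {d : ℕ} (hd : 1 ≤ d) :
    (x ^ (((d : ℝ) - 1) / 2)) ^ 2 = x ^ (d - 1) := by
  rw [← Real.rpow_natCast, ← Real.rpow_mul hx, ← Real.rpow_natCast x (d - 1),
    Nat.cast_sub hd]
  norm_num

section ExponentialSums

variable {F : Type*} [Field F] {d : ℕ} (χ : AddChar F ℂ)

noncomputable def expSum (s : Finset (Fin d → F)) (ξ : Fin d → F) : ℂ := ∑ x ∈ s, χ (ξ ⬝ᵥ x)

lemma expSum_zero (s : Finset (Fin d → F)) : expSum χ s 0 = #s := by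
  simp [expSum]

lemma prod_expSum {J : ℕ} (G : Fin J → Finset (Fin d → F)) (ξ : Fin d → F) :
    ∏ i, expSum χ (G i) ξ = ∑ x ∈ Fintype.piFinset G, χ (ξ ⬝ᵥ ∑ i, x i) := by
  simp only [expSum, prod_univ_sum, dotProduct_sum, AddChar.map_finsetSum]

variable [Fintype F] [DecidableEq F]

lemma sum_addChar_dotProduct (hχ : χ ≠ 1) (a : Fin d → F) :
    ∑ ξ : Fin d → F, χ (ξ ⬝ᵥ a) = if a = 0 then (Fintype.card F : ℂ) ^ d else 0 := by
  calc ∑ ξ : Fin d → F, χ (ξ ⬝ᵥ a) = ∏ i, ∑ t : F, χ (t * a i) := by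
        rw [prod_univ_sum]
        simp only [dotProduct, AddChar.map_finsetSum, Fintype.piFinset_univ]
    _ = ∏ i, if a i = 0 then (Fintype.card F : ℂ) else 0 := by
        simp only [AddChar.sum_mulShift _ (AddChar.IsPrimitive.of_ne_one hχ)]
        push_cast; rfl
    _ = _ := by simp [prod_ite_zero, funext_iff]

lemma energy_eq_sumEqCount (E : Finset (Fin d → F)) (J : ℕ) :
    energy J (E : Set (Fin d → F)) = sumEqCount (fun _ : Fin J => E) (fun _ => E) := by
  rw [energy, Nat.card_eq_fintype_card, Fintype.card_subtype, sumEqCount]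
  congr 1
  ext p
  simp [and_assoc]

lemma sum_prod_expSum_mul_conj (hχ : χ ≠ 1) {J : ℕ} (G H : Fin J → Finset (Fin d → F)) :
    ∑ ξ, (∏ i, expSum χ (G i) ξ) * conj (∏ i, expSum χ (H i) ξ) =
      (Fintype.card F : ℂ) ^ d * sumEqCount G H := by
  simp_rw [prod_expSum, map_sum, ← AddChar.map_neg_eq_conj, sum_mul_sum, ← sum_product',
    ← AddChar.map_add_eq_mul, ← sub_eq_add_neg, ← dotProduct_sub]
  rw [sum_product_right]
  simp_rw [sum_addChar_dotProduct χ hχ, sub_eq_zero, sum_ite, sum_const_zero, add_zero,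
    sum_const, nsmul_eq_mul, sumEqCount, mul_comm]

lemma sum_norm_expSum_pow (hχ : χ ≠ 1) (E : Finset (Fin d → F)) (J : ℕ) :
    ∑ ξ, ‖expSum χ E ξ‖ ^ (2 * J) = (Fintype.card F : ℝ) ^ d * energy J (E : Set (Fin d → F)) := by
  have h := sum_prod_expSum_mul_conj χ hχ (fun _ : Fin J => E) (fun _ => E)
  simp only [prod_const, card_univ, Fintype.card_fin, Complex.mul_conj', norm_pow,
    ← energy_eq_sumEqCount] at h
  have h' : ∑ ξ, (‖expSum χ E ξ‖ ^ J) ^ 2 =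
      (Fintype.card F : ℝ) ^ d * energy J (E : Set (Fin d → F)) := by exact_mod_cast h
  simpa only [← pow_mul'] using h'

lemma sum_norm_expSum_mul_le {E V : Finset (Fin d → F)} {β : ℝ} (hβ0 : 0 ≤ β)
    (hβ : ∀ ξ ≠ 0, ‖expSum χ V ξ‖ ≤ β) (n : ℕ) :
    ∑ ξ, ‖expSum χ V ξ‖ * ‖expSum χ E ξ‖ ^ n ≤ #V * #E ^ n + β * ∑ ξ, ‖expSum χ E ξ‖ ^ n := by
  rw [← add_sum_erase _ _ (mem_univ 0), expSum_zero, expSum_zero]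
  simp only [Complex.norm_natCast]
  gcongr
  calc ∑ ξ ∈ univ.erase 0, ‖expSum χ V ξ‖ * ‖expSum χ E ξ‖ ^ n
      ≤ ∑ ξ ∈ univ.erase 0, β * ‖expSum χ E ξ‖ ^ n :=
        sum_le_sum fun ξ hξ => by gcongr; exact hβ ξ (ne_of_mem_erase hξ)
    _ ≤ β * ∑ ξ, ‖expSum χ E ξ‖ ^ n := by
        rw [← mul_sum]
        gcongr
        exact erase_subset _ _

lemma card_pow_mul_energy_le (hχ : χ ≠ 1) {E V : Finset (Fin d → F)} (hEV : E ⊆ V) (m : ℕ) :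
    (Fintype.card F : ℝ) ^ d * energy (m + 2) (E : Set (Fin d → F)) ≤
      ∑ ξ, ‖expSum χ V ξ‖ * ‖expSum χ E ξ‖ ^ (2 * m + 3) := by
  let H : Fin (m + 2) → Finset (Fin d → F) := Fin.cons V fun _ => E
  have hcount : energy (m + 2) (E : Set (Fin d → F)) ≤ sumEqCount (fun _ => E) H := by
    rw [energy_eq_sumEqCount]
    exact sumEqCount_mono (fun _ => subset_rfl) (Fin.cases hEV fun _ => subset_rfl)
  calc (Fintype.card F : ℝ) ^ d * energy (m + 2) (E : Set (Fin d → F))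
      ≤ (Fintype.card F : ℝ) ^ d * sumEqCount (fun _ => E) H := by gcongr
    _ = ‖∑ ξ, (∏ _ : Fin (m + 2), expSum χ E ξ) * conj (∏ i, expSum χ (H i) ξ)‖ := by
        rw [sum_prod_expSum_mul_conj χ hχ]; simp
    _ ≤ ∑ ξ, ‖(∏ _ : Fin (m + 2), expSum χ E ξ) * conj (∏ i, expSum χ (H i) ξ)‖ := norm_sum_le _ _
    _ = ∑ ξ, ‖expSum χ V ξ‖ * ‖expSum χ E ξ‖ ^ (2 * m + 3) := by
        refine sum_congr rfl fun ξ _ => ?_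
        simp [H, Fin.prod_univ_succ, norm_pow]
        ring

theorem energy_add_two_le_of_norm_expSum_le (hχ : χ ≠ 1) {E V : Finset (Fin d → F)}
    (hEV : E ⊆ V) {β : ℝ} (hβ0 : 0 ≤ β) (hβ : ∀ ξ ≠ 0, ‖expSum χ V ξ‖ ≤ β) (m : ℕ) :
    (Fintype.card F : ℝ) ^ d * energy (m + 2) (E : Set (Fin d → F)) ≤
      2 * #V * #E ^ (2 * m + 3) +
        β ^ 2 * ((Fintype.card F : ℝ) ^ d * energy (m + 1) (E : Set (Fin d → F))) := by
  set u := fun ξ => ‖expSum χ E ξ‖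
  have hCS : (∑ ξ, u ξ ^ (2 * m + 3)) ^ 2 ≤
      (∑ ξ, u ξ ^ (2 * (m + 1))) * ∑ ξ, u ξ ^ (2 * (m + 2)) := by
    have := sum_mul_sq_le_sq_mul_sq univ (fun ξ => u ξ ^ (m + 1)) (fun ξ => u ξ ^ (m + 2))
    simp only [← pow_add, ← pow_mul'] at this
    rwa [show m + 1 + (m + 2) = 2 * m + 3 by ring] at this
  simp only [u, sum_norm_expSum_pow χ hχ] at hCS
  rw [mul_assoc 2]
  refine le_two_mul_add_of_le_add_of_sq_le (w := β * ∑ ξ, u ξ ^ (2 * m + 3)) ?_ ?_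
    (by positivity) (by positivity)
  · exact (card_pow_mul_energy_le χ hχ hEV m).trans (sum_norm_expSum_mul_le χ hβ0 hβ _)
  · rw [mul_pow]
    exact (mul_le_mul_of_nonneg_left hCS (sq_nonneg β)).trans_eq (by ring)

end ExponentialSums

section Regular
variable {F : Type*} [Field F] [Fintype F] {d : ℕ} {χ : AddChar F ℂ}

lemma norm_expSum_eq (V : Finset (Fin d → F)) (ξ : Fin d → F) :
    ‖expSum χ V ξ‖ = (Fintype.card F : ℝ) ^ d * ‖ftF χ (V : Set (Fin d → F)) ξ‖ := by
  have : ftF χ (V : Set (Fin d → F)) ξ = ((Fintype.card F : ℂ) ^ d)⁻¹ * conj (expSum χ V ξ) := by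
    simp [ftF, expSum, sum_indicator_subset _ (subset_univ V), map_sum,
      AddChar.map_neg_eq_conj, dotProduct]
  simp [this]

lemma IsRegularVariety.norm_expSum_le {c1 c2 c3 : ℝ} {V : Finset (Fin d → F)}
    (hV : IsRegularVariety c1 c2 c3 χ (V : Set (Fin d → F))) {ξ : Fin d → F} (hξ : ξ ≠ 0) :
    ‖expSum χ V ξ‖ ≤ c3 * (Fintype.card F : ℝ) ^ (((d : ℝ) - 1) / 2) := by
  have hq : (0 : ℝ) < Fintype.card F := Nat.cast_pos.2 Fintype.card_pos
  calc ‖expSum χ V ξ‖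
      ≤ (Fintype.card F : ℝ) ^ d * (c3 * (Fintype.card F : ℝ) ^ (-(((d : ℝ) + 1) / 2))) := by
        rw [norm_expSum_eq]
        gcongr
        exact hV.2.2 ξ hξ
    _ = c3 * (Fintype.card F : ℝ) ^ (((d : ℝ) - 1) / 2) := by
        rw [← Real.rpow_natCast, mul_left_comm, ← Real.rpow_add hq]
        ring_nf

theorem IsRegularVariety.energy_add_two_le [DecidableEq F] {c1 c2 c3 : ℝ} (hd : 1 ≤ d)
    (hc3 : 0 ≤ c3) (hχ : χ ≠ 1) {V E : Finset (Fin d → F)}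
    (hV : IsRegularVariety c1 c2 c3 χ (V : Set (Fin d → F))) (hEV : E ⊆ V) (m : ℕ) :
    (energy (m + 2) (E : Set (Fin d → F)) : ℝ) ≤
      2 * c2 * (#E : ℝ) ^ (2 * m + 3) / (Fintype.card F : ℝ) +
        c3 ^ 2 * (Fintype.card F : ℝ) ^ (d - 1) * energy (m + 1) (E : Set (Fin d → F)) := by
  set q : ℝ := (Fintype.card F : ℝ)
  have hq : 0 < q := Nat.cast_pos.2 Fintype.card_pos
  have hrec := energy_add_two_le_of_norm_expSum_le χ hχ hEV (by positivity)
    (fun ξ hξ => hV.norm_expSum_le hξ) m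
  rw [mul_pow, rpow_sub_one_div_two_sq hq.le hd] at hrec
  have hVcard : (#V : ℝ) ≤ c2 * q ^ (d - 1) := by simpa using hV.2.1
  have hqd : q ^ d = q ^ (d - 1) * q := by rw [← pow_succ, Nat.sub_add_cancel hd]
  rw [← mul_le_mul_iff_of_pos_left (pow_pos hq d)]
  calc q ^ d * energy (m + 2) (E : Set (Fin d → F))
      ≤ 2 * (c2 * q ^ (d - 1)) * (#E : ℝ) ^ (2 * m + 3) +
          c3 ^ 2 * q ^ (d - 1) * (q ^ d * energy (m + 1) (E : Set (Fin d → F))) := by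
        refine hrec.trans ?_
        gcongr
    _ = _ := by
        rw [hqd]
        field_simp

end Regular

theorem stmt_13_general (d k : ℕ) (hd : 2 ≤ d) (hk : 2 ≤ k) (hke : Even k)
    (c1 c2 c3 : ℝ) (hc2 : 0 < c2) (hc3 : 0 < c3) :
    ∃ C : ℝ, 0 < C ∧
      ∀ (F : Type) [Field F] [Fintype F], Odd (Fintype.card F) →
        ∀ χ : AddChar F ℂ, χ ≠ 1 →
          ∀ V : Set (Fin d → F), IsRegularVariety c1 c2 c3 χ V →
            ∀ E : Set (Fin d → F), E ⊆ V →
              (Fintype.card F : ℝ) ^ (((d : ℝ) - 1) / 2) < (Nat.card E : ℝ) →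
              (energy (k / 2) E : ℝ) ≤
                C * ((Fintype.card F : ℝ) ^ ((d - 1) * (k - 2) / 2) * (Nat.card E : ℝ) +
                  (Nat.card E : ℝ) ^ (k - 1) / (Fintype.card F : ℝ)) := by
  obtain ⟨n, rfl⟩ : ∃ n, k = 2 * n + 2 := by
    obtain ⟨t, rfl⟩ := hke
    exact ⟨t - 1, by omega⟩
  refine ⟨(1 + 2 * c2 + c3 ^ 2) ^ (n + 1), by positivity, ?_⟩
  intro F _ _ _ χ hχ V hV E hEV hE
  classical
  obtain ⟨V, rfl⟩ : ∃ V' : Finset (Fin d → F), (V' : Set _) = V := ⟨V.toFinset, by simp⟩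
  obtain ⟨E, rfl⟩ : ∃ E' : Finset (Fin d → F), (E' : Set _) = E := ⟨E.toFinset, by simp⟩
  rw [Nat.card_coe_set_eq, Set.ncard_coe_finset] at hE ⊢
  have hq : (0 : ℝ) < Fintype.card F := Nat.cast_pos.2 Fintype.card_pos
  have hqE : (Fintype.card F : ℝ) ^ (d - 1) ≤ (#E : ℝ) ^ 2 := by
    rw [← rpow_sub_one_div_two_sq hq.le (by omega)]
    gcongr
  have h1 : (energy 1 (E : Set (Fin d → F)) : ℝ) ≤ #E := by
    rw [energy_one, Nat.card_coe_set_eq, Set.ncard_coe_finset]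
  have hrec := hV.energy_add_two_le (by omega) hc3.le hχ (Finset.coe_subset.1 hEV)
  have hbound := le_pow_mul_of_recursion (Λ := fun J => (energy J (E : Set (Fin d → F)) : ℝ))
    (by positivity) (sq_nonneg c3) (by positivity) (by positivity) hq.le hqE h1 hrec n
  rw [show (2 * n + 2) / 2 = n + 1 by omega, show (d - 1) * (2 * n + 2 - 2) / 2 = (d - 1) * n by
    rw [Nat.add_sub_cancel, mul_left_comm, Nat.mul_div_cancel_left _ two_pos],
    show 2 * n + 2 - 1 = 2 * n + 1 by omega, pow_mul]
  exact hbound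

/-- for `d ≥ 2`, even `k ≥ 2` and `c₁, c₂, c₃ > 0` there is `C > 0` such that
for every odd prime power `q`, every `(c₁,c₂,c₃)`-regular `V ⊆ 𝔽_q^d` and every `E ⊆ V` with
`|E| > q^{(d-1)/2}`, one has `Λ_k(E) ≤ C (q^{(d-1)(k-2)/2} |E| + q^{-1} |E|^{k-1})`. -/
theorem stmt_13 (d k : ℕ) (hd : 2 ≤ d) (hk : 2 ≤ k) (hke : Even k)
    (c1 c2 c3 : ℝ) (hc1 : 0 < c1) (hc2 : 0 < c2) (hc3 : 0 < c3) :
    ∃ C : ℝ, 0 < C ∧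
      ∀ (F : Type) [Field F] [Fintype F], Odd (Fintype.card F) →
        ∀ χ : AddChar F ℂ, χ ≠ 1 →
          ∀ V : Set (Fin d → F), IsRegularVariety c1 c2 c3 χ V →
            ∀ E : Set (Fin d → F), E ⊆ V →
              (Fintype.card F : ℝ) ^ (((d : ℝ) - 1) / 2) < (Nat.card E : ℝ) →
              (energy (k / 2) E : ℝ) ≤
                C * ((Fintype.card F : ℝ) ^ ((d - 1) * (k - 2) / 2) * (Nat.card E : ℝ) +
                  (Nat.card E : ℝ) ^ (k - 1) / (Fintype.card F : ℝ)) :=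
  stmt_13_general d k hd hk hke c1 c2 c3 hc2 hc3
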